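/- arXiv:math/0006128 — 5 statements merged into one kernel-verified Lean document; each statement's English description precedes it below -/
import Mathlib

section
/- Let R be a discrete valuation ring with fraction field K, and let M and L be two R-lattices of full rank in an n-dimensional K-vector space V. Define s = min{k : π^k L ⊆ M} and r = max{k : M ⊆ π^k L}, where π is a uniformizer. Then s ≥ r, and the combinatorial distance between the lattice classes {M} and {L} in the Bruhat-Tits building of PGL(V) equals s - r. -/
open Pointwise

section BruhatTits

variable {R : Type*} [CommRing R] [IsDomain R] [IsDiscreteValuationRing R]
  {K : Type*} [Field K] [Algebra R K] [IsFractionRing R K]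
  {V : Type*} [AddCommGroup V] [Module K V] [Module R V] [IsScalarTower R K V]
  [SMulCommClass K R V]

/-- Two `R`-lattices in `V` are homothetic (define the same lattice class) if they
differ by a nonzero scalar of `K`. -/
def LatEquiv (M N : Submodule R V) : Prop := ∃ c : K, c ≠ 0 ∧ M = c • N

/-- Two lattice classes, represented by lattices `M` and `N`, are adjacent vertices
of the Bruhat–Tits building if they are different and have representatives `M'`,
`N'` with `π N' ⊆ M' ⊆ N'`. -/
def LatAdjacent (π : R) (M N : Submodule R V) : Prop :=
  ¬ LatEquiv (K := K) M N ∧ ∃ M' N' : Submodule R V, LatEquiv (K := K) M' M ∧ LatEquiv (K := K) N' N ∧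
    (algebraMap R K π) • N' ≤ M' ∧ M' ≤ N'

end BruhatTits


/-!
Call `π^a L ⊆ X ⊆ π^b L` a sandwich of `X` of width `a - b`. Homotheties by powers of `π`
shift `a` and `b` together, and every nonzero scalar of `K` acts on lattices as such a power,
so the least width is an invariant of the class `{X}`; along an edge `π Y ⊆ X ⊆ Y` it grows by
at most one. Since `L` has width `0`, every path from `{M}` to `{L}` has length at least the
least width of `M`. For `t ≤ s` the least width of `M + π^t L` is `t - r`: if
`π^(t-1) L ⊆ M + π^t L`, iterating gives `π^(t-1) L ⊆ M + π^s L = M`, against the minimality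
of `s`. So `M` has least width `s - r`, and `M + π^t L`, `t = s, s - 1, …, r`, is a path from
`M` to `π^r L` of that length whose consecutive members are not homothetic.
-/

section Lattices

variable {R K V : Type*} [CommRing R] [Field K] [AddCommGroup V] [Module K V] [Module R V]
  [SMulCommClass K R V]

theorem algebraMap_smul_submodule_le [Algebra R K] [IsScalarTower R K V] (r : R)
    (X : Submodule R V) : algebraMap R K r • X ≤ X := by
  rintro _ ⟨x, hx, rfl⟩
  simpa only [DistribSMul.toLinearMap_apply, algebraMap_smul] using X.smul_mem r hx

theorem algebraMap_unit_smul_submodule [Algebra R K] [IsScalarTower R K V] (u : Rˣ)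
    (X : Submodule R V) : algebraMap R K u • X = X := by
  refine le_antisymm (algebraMap_smul_submodule_le _ X) ?_
  calc X = algebraMap R K u • algebraMap R K ↑u⁻¹ • X := by
        rw [smul_smul, ← map_mul, Units.mul_inv, map_one, one_smul]
    _ ≤ algebraMap R K u • X := smul_le_smul_left _ (algebraMap_smul_submodule_le _ X)

theorem pow_smul_le_of_smul_le {a : K} {X : Submodule R V} (hX : a • X ≤ X) (k : ℕ) :
    a ^ k • X ≤ X := by
  induction k with
  | zero => simp
  | succ k ih =>
    rw [pow_succ', mul_smul]
    exact (smul_le_smul_left a ih).trans hX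

theorem zpow_smul_le_zpow_smul {c : K} (hc : c ≠ 0) {X : Submodule R V} (hX : c • X ≤ X)
    {m k : ℤ} (hmk : m ≤ k) : c ^ k • X ≤ c ^ m • X := by
  obtain ⟨j, rfl⟩ := Int.exists_add_of_le hmk
  rw [zpow_add₀ hc, mul_smul, zpow_natCast]
  exact smul_le_smul_left _ (pow_smul_le_of_smul_le hX j)

theorem le_sup_pow_smul_of_le_sup_smul {a : K} {A X : Submodule R V} (hA : a • A ≤ A)
    (h : X ≤ A ⊔ a • X) (k : ℕ) : X ≤ A ⊔ a ^ k • X := by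
  induction k with
  | zero => simp
  | succ k ih =>
    calc X ≤ A ⊔ a ^ k • X := ih
      _ ≤ A ⊔ a ^ k • (A ⊔ a • X) := sup_le_sup_left (smul_le_smul_left _ h) A
      _ = A ⊔ (a ^ k • A ⊔ a ^ (k + 1) • X) := by rw [Submodule.smul_sup', smul_smul, ← pow_succ]
      _ ≤ A ⊔ a ^ (k + 1) • X := by
        rw [← sup_assoc, sup_eq_left.mpr (pow_smul_le_of_smul_le hA k)]

theorem LatEquiv.symm [Algebra R K] {X Y : Submodule R V} (h : LatEquiv (K := K) X Y) :
    LatEquiv (K := K) Y X := by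
  obtain ⟨e, he, rfl⟩ := h
  exact ⟨e⁻¹, inv_ne_zero he, (inv_smul_smul₀ he Y).symm⟩

theorem LatEquiv.exists_eq_zpow_smul [IsDomain R] [IsDiscreteValuationRing R] [Algebra R K]
    [IsFractionRing R K] [IsScalarTower R K V] {π : R} (hπ : Irreducible π)
    {X Y : Submodule R V} (h : LatEquiv (K := K) X Y) :
    ∃ v : ℤ, X = algebraMap R K π ^ v • Y := by
  obtain ⟨e, he, rfl⟩ := h
  obtain ⟨v, u, rfl⟩ := IsDiscreteValuationRing.exists_units_eq_smul_zpow_of_irreducible hπ he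
  refine ⟨v, ?_⟩
  rw [Units.smul_def, Algebra.smul_def, mul_smul, algebraMap_unit_smul_submodule]

def Sandwiched (c : K) (L X : Submodule R V) (k : ℤ) : Prop :=
  ∃ a b : ℤ, a - b ≤ k ∧ c ^ a • L ≤ X ∧ X ≤ c ^ b • L

theorem sandwiched_self (c : K) (L : Submodule R V) : Sandwiched c L L 0 :=
  ⟨0, 0, le_rfl, by simp, by simp⟩

namespace Sandwiched

variable {c : K} {L X Y : Submodule R V} {k : ℤ}

theorem zpow_smul (hc : c ≠ 0) (h : Sandwiched c L X k) (v : ℤ) :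
    Sandwiched c L (c ^ v • X) k := by
  obtain ⟨a, b, hab, haX, hXb⟩ := h
  refine ⟨v + a, v + b, by omega, ?_, ?_⟩
  · rw [zpow_add₀ hc, mul_smul]
    exact smul_le_smul_left _ haX
  · rw [zpow_add₀ hc, mul_smul]
    exact smul_le_smul_left _ hXb

theorem of_smul_le_of_le (hc : c ≠ 0) (hYX : c • Y ≤ X) (hXY : X ≤ Y)
    (h : Sandwiched c L Y k) : Sandwiched c L X (k + 1) := by
  obtain ⟨a, b, hab, haY, hYb⟩ := h
  refine ⟨a + 1, b, by omega, ?_, hXY.trans hYb⟩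
  rw [zpow_add_one₀ hc, mul_comm, mul_smul]
  exact (smul_le_smul_left c haY).trans hYX

variable [IsDomain R] [IsDiscreteValuationRing R] [Algebra R K] [IsFractionRing R K]
  [IsScalarTower R K V] {π : R}

theorem of_latEquiv (hπ : Irreducible π) (hXY : LatEquiv (K := K) X Y)
    (h : Sandwiched (algebraMap R K π) L Y k) : Sandwiched (algebraMap R K π) L X k := by
  obtain ⟨v, rfl⟩ := hXY.exists_eq_zpow_smul hπ
  exact h.zpow_smul (by simpa using hπ.ne_zero) v

theorem of_latAdjacent (hπ : Irreducible π) (hXY : LatAdjacent (K := K) π X Y)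
    (h : Sandwiched (algebraMap R K π) L Y k) : Sandwiched (algebraMap R K π) L X (k + 1) := by
  obtain ⟨-, X', Y', hX', hY', hYX', hXY'⟩ := hXY
  have hY'L := h.of_latEquiv hπ hY'
  exact (hY'L.of_smul_le_of_le (by simpa using hπ.ne_zero) hYX' hXY').of_latEquiv hπ hX'.symm

end Sandwiched

theorem sandwiched_of_adjacent_chain [IsDomain R] [IsDiscreteValuationRing R] [Algebra R K]
    [IsFractionRing R K] [IsScalarTower R K V] {π : R} (hπ : Irreducible π) {L : Submodule R V}
    {d : ℕ} {x : Fin (d + 1) → Submodule R V} (hlast : LatEquiv (K := K) (x (Fin.last d)) L)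
    (hadj : ∀ i : Fin d, LatAdjacent (K := K) π (x i.castSucc) (x i.succ)) :
    Sandwiched (algebraMap R K π) L (x 0) d := by
  have key : ∀ i, Sandwiched (algebraMap R K π) L (x i) (d - i) := by
    refine Fin.reverseInduction ?_ fun i hi => ?_
    · simpa using (sandwiched_self _ L).of_latEquiv hπ hlast
    · convert hi.of_latAdjacent hπ (hadj i) using 1
      simp only [Fin.val_castSucc, Fin.val_succ]
      push_cast
      ring
  simpa using key 0

section Gap

variable {c : K} {M L : Submodule R V} {s r : ℤ}

theorem le_of_isGreatest_of_zpow_smul_le (hc : c ≠ 0) (hL : c • L ≤ L) (hs : c ^ s • L ≤ M)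
    (hr : IsGreatest {k : ℤ | M ≤ c ^ k • L} r) : r ≤ s := by
  by_contra! hsr
  have hLc : L ≤ c • L := by
    have h : c ^ s • L ≤ c ^ s • c • L := by
      rw [smul_smul, ← zpow_add_one₀ hc]
      exact hs.trans (hr.1.trans (zpow_smul_le_zpow_smul hc hL (by omega)))
    simpa only [inv_smul_smul₀ (zpow_ne_zero s hc)] using smul_le_smul_left (c ^ s)⁻¹ h
  have hM : M ≤ c ^ (r + 1) • L := by
    rw [zpow_add_one₀ hc, mul_smul]
    exact hr.1.trans (smul_le_smul_left _ hLc)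
  have := hr.2 hM
  omega

theorem le_of_zpow_smul_le_sup (hc : c ≠ 0) (hM : c • M ≤ M) (hL : c • L ≤ L)
    (hs : IsLeast {k : ℤ | c ^ k • L ≤ M} s) {t a : ℤ} (hts : t ≤ s)
    (ha : c ^ a • L ≤ M ⊔ c ^ t • L) : t ≤ a := by
  by_contra! hat
  have hstep : c ^ (t - 1) • L ≤ M ⊔ c • c ^ (t - 1) • L := by
    rw [smul_smul, ← zpow_one_add₀ hc, add_sub_cancel]
    exact (zpow_smul_le_zpow_smul hc hL (by omega)).trans ha
  have h := le_sup_pow_smul_of_le_sup_smul hM hstep (s - t + 1).toNat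
  rw [smul_smul, ← zpow_natCast, ← zpow_add₀ hc,
    show ((s - t + 1).toNat : ℤ) + (t - 1) = s by omega, sup_eq_left.mpr hs.1] at h
  have := hs.2 h
  omega

theorem sub_le_of_sandwiched_sup (hc : c ≠ 0) (hM : c • M ≤ M) (hL : c • L ≤ L)
    (hs : IsLeast {k : ℤ | c ^ k • L ≤ M} s) (hr : r ∈ upperBounds {k : ℤ | M ≤ c ^ k • L})
    {t k : ℤ} (hts : t ≤ s) (h : Sandwiched c L (M ⊔ c ^ t • L) k) : t - r ≤ k := by
  obtain ⟨a, b, hab, ha, hb⟩ := h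
  have hta := le_of_zpow_smul_le_sup hc hM hL hs hts ha
  have hbr := hr (le_sup_left.trans hb)
  omega

theorem latAdjacent_sup_zpow_smul [IsDomain R] [IsDiscreteValuationRing R] [Algebra R K]
    [IsFractionRing R K] [IsScalarTower R K V] {π : R} (hπ : Irreducible π)
    (hs : IsLeast {k : ℤ | algebraMap R K π ^ k • L ≤ M} s)
    (hr : IsGreatest {k : ℤ | M ≤ algebraMap R K π ^ k • L} r) {t : ℤ} (hrt : r < t)
    (hts : t ≤ s) :
    LatAdjacent (K := K) π (M ⊔ algebraMap R K π ^ t • L)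
      (M ⊔ algebraMap R K π ^ (t - 1) • L) := by
  set c := algebraMap R K π
  have hc : c ≠ 0 := by simpa [c] using hπ.ne_zero
  have hM : c • M ≤ M := algebraMap_smul_submodule_le π M
  have hL : c • L ≤ L := algebraMap_smul_submodule_le π L
  refine ⟨fun hequiv => ?_, _, _, ⟨1, one_ne_zero, (one_smul _ _).symm⟩,
    ⟨1, one_ne_zero, (one_smul _ _).symm⟩, ?_, ?_⟩
  · have hB : Sandwiched c L (M ⊔ c ^ (t - 1) • L) (t - 1 - r) :=
      ⟨t - 1, r, le_rfl, le_sup_right, sup_le hr.1 (zpow_smul_le_zpow_smul hc hL (by omega))⟩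
    have := sub_le_of_sandwiched_sup hc hM hL hs hr.2 hts (hB.of_latEquiv hπ hequiv)
    omega
  · rw [Submodule.smul_sup', smul_smul, ← zpow_one_add₀ hc, add_sub_cancel]
    exact sup_le_sup_right hM _
  · exact sup_le_sup_left (zpow_smul_le_zpow_smul hc hL (by omega)) M

end Gap

end Lattices

theorem stmt0_general {R : Type*} [CommRing R] [IsDomain R] [IsDiscreteValuationRing R]
    {K : Type*} [Field K] [Algebra R K] [IsFractionRing R K]
    {V : Type*} [AddCommGroup V] [Module K V] [Module R V] [IsScalarTower R K V]
    [SMulCommClass K R V]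
    (π : R) (hπ : Irreducible π)
    (M L : Submodule R V)
    (s r : ℤ)
    (hs : IsLeast {k : ℤ | ((algebraMap R K π) ^ k) • L ≤ M} s)
    (hr : IsGreatest {k : ℤ | M ≤ ((algebraMap R K π) ^ k) • L} r) :
    r ≤ s ∧
    IsLeast {d : ℕ | ∃ x : Fin (d + 1) → Submodule R V,
        LatEquiv (K := K) (x 0) M ∧ LatEquiv (K := K) (x (Fin.last d)) L ∧
        ∀ i : Fin d, LatAdjacent (K := K) π (x i.castSucc) (x i.succ)}
      (s - r).toNat := by
  set c := algebraMap R K π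
  have hc : c ≠ 0 := by simpa [c] using hπ.ne_zero
  have hM : c • M ≤ M := algebraMap_smul_submodule_le π M
  have hL : c • L ≤ L := algebraMap_smul_submodule_le π L
  have hrs : r ≤ s := le_of_isGreatest_of_zpow_smul_le hc hL hs.1 hr
  have hsup : M ⊔ c ^ s • L = M := sup_eq_left.mpr hs.1
  refine ⟨hrs, ⟨fun i => M ⊔ c ^ (s - i) • L, ?_, ?_, fun i => ?_⟩, ?_⟩
  · exact ⟨1, one_ne_zero, by simpa using hsup⟩
  · refine ⟨c ^ r, zpow_ne_zero r hc, ?_⟩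
    dsimp only
    rw [Fin.val_last, Int.toNat_of_nonneg (by omega), sub_sub_cancel]
    exact sup_eq_right.mpr hr.1
  · have hi : (i : ℤ) < s - r := by have := i.isLt; omega
    convert latAdjacent_sup_zpow_smul hπ hs hr (t := s - i) (by omega) (by omega) using 4
    · simp
    · simp only [Fin.val_succ]
      push_cast
      ring
  · rintro d ⟨x, hx0, hlast, hadj⟩
    have hMd := (sandwiched_of_adjacent_chain hπ hlast hadj).of_latEquiv hπ hx0.symm
    rw [← hsup] at hMd
    have := sub_le_of_sandwiched_sup hc hM hL hs hr.2 le_rfl hMd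
    omega

/-- for full-rank lattices `M`, `L` in an `n`-dimensional `K`-vector
space, with `s = min{k : π^k L ⊆ M}` and `r = max{k : M ⊆ π^k L}`, one has `s ≥ r`
and the combinatorial distance between the classes `{M}` and `{L}` (the minimal
number of adjacency steps) equals `s - r`. -/
theorem stmt0 {R : Type*} [CommRing R] [IsDomain R] [IsDiscreteValuationRing R]
    {K : Type*} [Field K] [Algebra R K] [IsFractionRing R K]
    {V : Type*} [AddCommGroup V] [Module K V] [Module R V] [IsScalarTower R K V]
    [SMulCommClass K R V] [FiniteDimensional K V]
    (n : ℕ) (hn : n = Module.finrank K V) (hn1 : 1 ≤ n)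
    (π : R) (hπ : Irreducible π)
    (M L : Submodule R V)
    (hMfree : Module.Free R M) (hMrank : Module.finrank R M = n)
    (hMspan : Submodule.span K (M : Set V) = ⊤)
    (hLfree : Module.Free R L) (hLrank : Module.finrank R L = n)
    (hLspan : Submodule.span K (L : Set V) = ⊤)
    (s r : ℤ)
    (hs : IsLeast {k : ℤ | ((algebraMap R K π) ^ k) • L ≤ M} s)
    (hr : IsGreatest {k : ℤ | M ≤ ((algebraMap R K π) ^ k) • L} r) :
    r ≤ s ∧
    IsLeast {d : ℕ | ∃ x : Fin (d + 1) → Submodule R V,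
        LatEquiv (K := K) (x 0) M ∧ LatEquiv (K := K) (x (Fin.last d)) L ∧
        ∀ i : Fin d, LatAdjacent (K := K) π (x i.castSucc) (x i.succ)}
      (s - r).toNat :=
  stmt0_general π hπ M L s r hs hr
end

section
/- Let R be a discrete valuation ring with uniformizer π, M a free R-module of rank n, and N a submodule of M containing π^m M such that N/π^m M is a direct summand of M/π^m M. Then there exists an R-basis x_1,...,x_n of M and an integer r such that N is generated by x_1,...,x_r, π^m x_{r+1},...,π^m x_n. -/
/-!
Let `Q ⊆ M` be the preimage of a complement of `N/π^m M`, so that `N + Q = M` and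
`N ∩ Q = π^m M`. Since `N ⊇ π^m M` has full rank, the Smith normal form gives a basis `b` of `M`
with `N` spanned by the `π^{k_i} b_i`, `k_i ≤ m`. If `0 < k_j < m`, write `b_j = x + v` with
`x ∈ N`, `v ∈ Q`: then `π^{k_j} v ∈ N ∩ Q = π^m M` forces `v ∈ π M`, and the `j`-th coordinate of
`x ∈ N` lies in `π R`, so the `j`-th coordinate `1` of `b_j` would be divisible by `π`. Hence every
`k_i` is `0` or `m`, and it remains to reorder the basis.
-/

open Pointwise

theorem Fin.exists_perm_apply_iff_lt {n : ℕ} (p : Fin n → Prop) [DecidablePred p] :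
    ∃ σ : Equiv.Perm (Fin n), ∃ r ≤ n, ∀ i, p (σ i) ↔ (i : ℕ) < r := by
  set r := Fintype.card {i // p i}
  have hcard : r + Fintype.card {i // ¬p i} = n := by
    rw [← Fintype.card_sum, Fintype.card_congr (Equiv.sumCompl p), Fintype.card_fin]
  let τ : Fin n ≃ Fin n := (Equiv.sumCompl p).symm.trans <|
    ((Fintype.equivFin _).sumCongr (Fintype.equivFin _)).trans <|
      finSumFinEquiv.trans (finCongr hcard)
  refine ⟨τ.symm, r, hcard ▸ Nat.le_add_right _ _, fun i => ?_⟩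
  obtain ⟨j, rfl⟩ := τ.surjective i
  rw [Equiv.symm_apply_apply]
  by_cases hj : p j
  · simp only [τ, Equiv.trans_apply, Equiv.sumCompl_symm_apply_of_pos hj, Equiv.sumCongr_apply,
      Sum.map_inl, finSumFinEquiv_apply_left, finCongr_apply, Fin.val_cast, Fin.val_castAdd, hj,
      true_iff]
    exact Fin.is_lt _
  · simp [τ, r, Equiv.sumCompl_symm_apply_of_neg hj, hj]

namespace Submodule

variable {R M : Type*} [CommRing R] [AddCommGroup M] [Module R M]

theorem sup_comap_mkQ_eq_top_of_isCompl {L N : Submodule R M} {P : Submodule R (M ⧸ L)}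
    (h : IsCompl (N.map L.mkQ) P) : N ⊔ P.comap L.mkQ = ⊤ := by
  have hL : L ≤ P.comap L.mkQ := by simpa only [ker_mkQ] using LinearMap.ker_le_comap L.mkQ
  rw [← sup_eq_right.mpr (hL.trans le_sup_right), ← map_mkQ_eq_top, map_sup,
    map_comap_eq_of_surjective L.mkQ_surjective, h.sup_eq_top]

theorem inf_comap_mkQ_eq_of_isCompl {L N : Submodule R M} {P : Submodule R (M ⧸ L)}
    (hLN : L ≤ N) (h : IsCompl (N.map L.mkQ) P) : N ⊓ P.comap L.mkQ = L := by
  have := congrArg (comap L.mkQ) h.inf_eq_bot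
  rwa [comap_inf, comap_map_mkQ, sup_eq_right.mpr hLN, comap_bot, ker_mkQ] at this

theorem finrank_eq_of_smul_top_le [IsDomain R] [Module.Finite R M] {c : R} (hc : c ≠ 0)
    {N : Submodule R M} (hN : c • (⊤ : Submodule R M) ≤ N) :
    Module.finrank R N = Module.finrank R M := by
  have htors : Module.IsTorsion R (M ⧸ N) := by
    rintro ⟨x⟩
    exact ⟨⟨c, mem_nonZeroDivisors_of_ne_zero hc⟩, (Quotient.mk_eq_zero N).mpr
      (hN (smul_mem_pointwise_smul x c ⊤ mem_top))⟩
  rw [← N.finrank_quotient_add_finrank, htors.finrank_eq_zero, zero_add]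

theorem span_range_coe_basis {ι : Type*} {N : Submodule R M} (b : Module.Basis ι R N) :
    span R (Set.range fun i => (b i : M)) = N := by
  conv_rhs =>
    rw [← N.range_subtype, LinearMap.range_eq_map, ← b.span_eq, map_span, ← Set.range_comp]
  rfl

end Submodule

namespace Module.Basis

variable {R M ι : Type*} [CommRing R] [AddCommGroup M] [Module R M] [Fintype ι]

theorem dvd_repr_of_mem_span_smul (b : Basis ι R M) (c : ι → R) {x : M}
    (hx : x ∈ Submodule.span R (Set.range fun i => c i • b i)) (j : ι) :
    c j ∣ b.repr x j := by
  obtain ⟨g, rfl⟩ := (Submodule.mem_span_range_iff_exists_fun R).mp hx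
  simp only [smul_smul, b.repr_sum_self]
  exact dvd_mul_left _ _

theorem exponent_eq_zero_or_eq_of_sup_eq_top [IsDomain R] {π : R} (hπ : Irreducible π)
    (b : Basis ι R M) {k : ι → ℕ} {m : ℕ} {N Q : Submodule R M}
    (hN : N = Submodule.span R (Set.range fun i => π ^ k i • b i))
    (hsup : N ⊔ Q = ⊤) (hinf : N ⊓ Q ≤ π ^ m • ⊤) {j : ι} (hj : k j ≤ m) :
    k j = 0 ∨ k j = m := by
  have := b.isTorsionFree
  by_contra! hk
  obtain ⟨x, hxN, v, hvQ, hxv⟩ := Submodule.mem_sup.mp (hsup ▸ Submodule.mem_top : b j ∈ N ⊔ Q)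
  have hvN : π ^ k j • v ∈ N := by
    rw [show π ^ k j • v = π ^ k j • b j - π ^ k j • x by
      rw [← hxv, smul_add, add_sub_cancel_left]]
    exact sub_mem (hN ▸ Submodule.subset_span ⟨j, rfl⟩) (N.smul_mem _ hxN)
  obtain ⟨z, -, hz⟩ := (Submodule.mem_smul_pointwise_iff_exists _ _ _).mp
    (hinf ⟨hvN, Q.smul_mem _ hvQ⟩)
  have hv : v = π ^ (m - k j) • z := by
    refine smul_right_injective M (pow_ne_zero (k j) hπ.ne_zero) ?_
    simp only [smul_smul, ← pow_add, Nat.add_sub_cancel' hj, hz]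
  have hx : π ∣ b.repr x j :=
    (dvd_pow_self π hk.1).trans (b.dvd_repr_of_mem_span_smul _ (hN ▸ hxN) j)
  have hv' : π ∣ b.repr v j := by
    rw [hv, map_smul, Finsupp.smul_apply, smul_eq_mul]
    exact (dvd_pow_self π (by omega)).mul_right _
  have hone : b.repr x j + b.repr v j = 1 := by
    rw [← Finsupp.add_apply, ← map_add, hxv, repr_self, Finsupp.single_eq_same]
  exact hπ.not_isUnit (isUnit_of_dvd_one (hone ▸ dvd_add hx hv'))

end Module.Basis

theorem Submodule.exists_basis_eq_span_pow_smul {R M ι : Type*} [CommRing R] [IsDomain R]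
    [IsPrincipalIdealRing R] [AddCommGroup M] [Module R M] [Fintype ι] {π : R} (hπ : Prime π)
    (bM : Module.Basis ι R M) {m : ℕ} {N : Submodule R M} (hN : π ^ m • ⊤ ≤ N) :
    ∃ (b : Module.Basis ι R M) (k : ι → ℕ), (∀ i, k i ≤ m) ∧
      N = span R (Set.range fun i => π ^ k i • b i) := by
  have := Module.Finite.of_basis bM
  obtain ⟨b, a, bN, hbN⟩ := exists_smith_normal_form_of_rank_eq bM
    (finrank_eq_of_smul_top_le (pow_ne_zero m hπ.ne_zero) hN)
  have hNa : N = span R (Set.range fun i => a i • b i) := by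
    simp_rw [← hbN, span_range_coe_basis]
  have hdvd : ∀ i, a i ∣ π ^ m := fun i => by
    have hmem : π ^ m • b i ∈ N := hN (smul_mem_pointwise_smul (b i) _ ⊤ mem_top)
    rw [hNa] at hmem
    simpa using b.dvd_repr_of_mem_span_smul a hmem i
  choose k hkm u hu using fun i => (dvd_prime_pow hπ m).mp (hdvd i)
  refine ⟨b.unitsSMul fun i => (u i)⁻¹, k, hkm, hNa.trans ?_⟩
  simp_rw [Module.Basis.unitsSMul_apply, ← hu, Units.smul_def, smul_smul, mul_assoc,
    Units.mul_inv, mul_one]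

theorem stmt1_general {R : Type*} [CommRing R] [IsDomain R] [IsDiscreteValuationRing R]
    (π : R) (hπ : Irreducible π) (m : ℕ)
    {M : Type*} [AddCommGroup M] [Module R M] (n : ℕ) (bM : Module.Basis (Fin n) R M)
    (N : Submodule R M) (hNsub : π ^ m • (⊤ : Submodule R M) ≤ N)
    -- `N/π^m M` is a direct summand of `M/π^m M`
    (hsplit : ∃ P : Submodule R (M ⧸ (π ^ m • (⊤ : Submodule R M))),
      IsCompl (Submodule.map (Submodule.mkQ (π ^ m • (⊤ : Submodule R M))) N) P) :
    ∃ (b : Module.Basis (Fin n) R M) (r : ℕ), r ≤ n ∧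
      N = Submodule.span R
        (Set.range fun i : Fin n => if (i : ℕ) < r then b i else π ^ m • b i) := by
  classical
  obtain ⟨P, hP⟩ := hsplit
  obtain ⟨b, k, hkm, hN⟩ := N.exists_basis_eq_span_pow_smul hπ.prime bM hNsub
  have hk : ∀ j, k j = 0 ∨ k j = m := fun j =>
    b.exponent_eq_zero_or_eq_of_sup_eq_top hπ hN (Submodule.sup_comap_mkQ_eq_top_of_isCompl hP)
      (Submodule.inf_comap_mkQ_eq_of_isCompl hNsub hP).le (hkm j)
  obtain ⟨σ, r, hr, hσ⟩ := Fin.exists_perm_apply_iff_lt fun j => k j = 0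
  refine ⟨b.reindex σ.symm, r, hr, hN.trans ?_⟩
  rw [← σ.surjective.range_comp]
  congr 2 with i
  simp only [Function.comp_apply, Module.Basis.reindex_apply, Equiv.symm_symm]
  split_ifs with hi
  · rw [(hσ i).mpr hi, pow_zero, one_smul]
  · rw [(hk (σ i)).resolve_left (mt (hσ i).mp hi)]

/-- Over a DVR `R` with uniformizer `π`, if `N` is a submodule of a
free module `M` of rank `n` with `π^m M ⊆ N` such that `N/π^m M` is a direct
summand of `M/π^m M`, then there is an `R`-basis `x_1,…,x_n` of `M` and an `r`
such that `N` is generated by `x_1,…,x_r, π^m x_{r+1},…,π^m x_n`. -/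
theorem stmt1 {R : Type*} [CommRing R] [IsDomain R] [IsDiscreteValuationRing R]
    (π : R) (hπ : Irreducible π) (m : ℕ) (hm : 1 ≤ m)
    {M : Type*} [AddCommGroup M] [Module R M] (n : ℕ) (bM : Module.Basis (Fin n) R M)
    (N : Submodule R M) (hNsub : π ^ m • (⊤ : Submodule R M) ≤ N)
    -- `N/π^m M` is a direct summand of `M/π^m M`
    (hsplit : ∃ P : Submodule R (M ⧸ (π ^ m • (⊤ : Submodule R M))),
      IsCompl (Submodule.map (Submodule.mkQ (π ^ m • (⊤ : Submodule R M))) N) P) :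
    ∃ (b : Module.Basis (Fin n) R M) (r : ℕ), r ≤ n ∧
      N = Submodule.span R
        (Set.range fun i : Fin n => if (i : ℕ) < r then b i else π ^ m • b i) :=
  stmt1_general π hπ m n bM N hNsub hsplit
end

section
/- Let V be an n-dimensional vector space over a discretely valued field K with valuation ring R. Suppose V = (C∩D) ⊕ C' ⊕ D' with dim C' = dim D' = p, and A, B ⊆ C' ⊕ D' are p-dimensional subspaces with A∩(C'⊕D'∩C) = A∩D = B∩C = B∩D = 0 where C = (C∩D)⊕C' and D = (C∩D)⊕D'. Let L_A, L_B be full-rank lattices in A, B with p_{C'}(L_B) = α·p_{C'}(L_A) and p_{D'}(L_B) = β·p_{D'}(L_A) for scalars α, β ∈ K^×. Then the intersection number v( det(f_j(a_i)) det(g_j(b_i)) / (det(f_j(b_i)) det(g_j(a_i))) ) equals p·v(α/β), where a_i, b_i are bases of L_A, L_B, f_j a basis of (V/C)*, and g_j a basis of (V/D)*. -/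
/-!
Since `f` vanishes on `C ⊇ C'` and `A, B ⊆ C' ⊕ D'`, the values `f_j(a_i)`, `f_j(b_i)` only
depend on the components `p_{D'}(a_i)`, `p_{D'}(b_i)`. The hypothesis on `p_{D'}(L_B)` means
`p_{D'}(b) = β • M p_{D'}(a)` for some `M ∈ GL_p(R)`, so
`det(f_j(b_i)) = β^p det M · det(f_j(a_i))`, and `v (det M) = 0`; symmetrically
`det(g_j(b_i)) = α^p det N · det(g_j(a_i))`. The determinants `det(f_j(a_i))` and `det(g_j(a_i))`
cancel: they are nonzero because `f` cuts out `C`, `g` cuts out `D`, and `A` meets both trivially.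
-/

open Matrix Pointwise

section

open Submodule

theorem exists_isUnit_det_of_span_eq {R M ι : Type*} [CommRing R] [AddCommGroup M] [Module R M]
    [Fintype ι] [DecidableEq ι] {x y : ι → M} (hx : LinearIndependent R x)
    (h : span R (Set.range y) = span R (Set.range x)) :
    ∃ P : Matrix ι ι R, IsUnit P.det ∧ ∀ i, y i = ∑ k, P i k • x k := by
  have hy : ∀ i, ∃ c : ι → R, ∑ k, c k • x k = y i := fun i =>
    (mem_span_range_iff_exists_fun R).mp (h ▸ subset_span (Set.mem_range_self i))
  have hx' : ∀ k, ∃ c : ι → R, ∑ i, c i • y i = x k := fun k =>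
    (mem_span_range_iff_exists_fun R).mp (h.symm ▸ subset_span (Set.mem_range_self k))
  choose P hP using hy
  choose Q hQ using hx'
  refine ⟨of P, isUnit_det_of_left_inverse (B := of Q) ?_, fun i => (hP i).symm⟩
  funext k
  apply linearIndependent_iff_injective_fintypeLinearCombination.mp hx
  calc ∑ l, (of Q * of P) k l • x l = ∑ i, Q k i • y i := by
        simp only [mul_apply, of_apply, Finset.sum_smul, ← hP, Finset.smul_sum, smul_smul]
        exact Finset.sum_comm
    _ = x k := hQ k
    _ = ∑ l, (1 : Matrix ι ι R) k l • x l := by simp [one_apply]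

theorem det_eval_eq_det_mul_det_eval {R K V ι : Type*} [CommRing R] [Field K] [Algebra R K]
    [AddCommGroup V] [Module K V] [Module R V] [IsScalarTower R K V] [Fintype ι] [DecidableEq ι]
    (φ : ι → Module.Dual K V) {x y : ι → V} (P : Matrix ι ι R)
    (hP : ∀ i, y i = ∑ k, P i k • x k) :
    (of fun i j => φ j (y i)).det = algebraMap R K P.det * (of fun i j => φ j (x i)).det := by
  have : (of fun i j => φ j (y i)) = P.map (algebraMap R K) * of fun i j => φ j (x i) := by
    ext i j
    simp [hP, mul_apply, Algebra.smul_def]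
  rw [this, det_mul, RingHom.map_det, RingHom.mapMatrix_apply]

theorem sub_apply_mem_of_mem_sup {K V : Type*} [Ring K] [AddCommGroup V] [Module K V]
    {P Q : Submodule K V} (π : V →ₗ[K] V) (hπP : ∀ x ∈ P, π x = 0)
    (hπQ : ∀ x ∈ Q, π x = x) {x : V} (hx : x ∈ P ⊔ Q) : x - π x ∈ P := by
  obtain ⟨p, hp, q, hq, rfl⟩ := mem_sup.mp hx
  simpa [hπP p hp, hπQ q hq] using hp

theorem det_eval_ne_zero {K V ι : Type*} [Field K] [AddCommGroup V] [Module K V]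
    [FiniteDimensional K V] [Fintype ι] [DecidableEq ι] {W A : Submodule K V}
    (hW : Fintype.card ι + Module.finrank K W = Module.finrank K V) (hAW : A ⊓ W = ⊥)
    {f : ι → Module.Dual K V} (hfW : ∀ j, f j ∈ W.dualAnnihilator)
    (hf : LinearIndependent K f)
    {a : ι → V} (ha : LinearIndependent K a) (haA : ∀ i, a i ∈ A) :
    (of fun i j => f j (a i)).det ≠ 0 := by
  have hker_eq : LinearMap.ker (LinearMap.pi f) = (span K (Set.range f)).dualCoannihilator := by
    ext x
    rw [← SetLike.mem_coe (p := dualCoannihilator _), coe_dualCoannihilator_span]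
    simp [funext_iff]
  have hWker : W ≤ LinearMap.ker (LinearMap.pi f) := fun x hx =>
    funext fun j => (mem_dualAnnihilator _).mp (hfW j) x hx
  have hker : LinearMap.ker (LinearMap.pi f) = W := by
    refine (eq_of_le_of_finrank_le hWker ?_).symm
    have := Subspace.finrank_add_finrank_dualCoannihilator_eq (span K (Set.range f))
    rw [finrank_span_eq_card hf, ← hker_eq] at this
    omega
  have hrows : LinearIndependent K (LinearMap.pi f ∘ a) := by
    refine ha.map ?_
    rw [hker, disjoint_def]
    intro x hx hxW
    have hxA : x ∈ A := span_le.mpr (by rintro _ ⟨i, rfl⟩; exact haA i) hx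
    simpa [hAW] using mem_inf.mpr ⟨hxA, hxW⟩
  exact ((isUnit_iff_isUnit_det _).mp (linearIndependent_rows_iff_isUnit.mp hrows)).ne_zero

theorem exists_unit_det_eval_eq {R K V ι : Type*} [CommRing R] [Field K] [Algebra R K]
    [IsFractionRing R K] [AddCommGroup V] [Module K V] [Module R V] [IsScalarTower R K V]
    [SMulCommClass K R V] [Fintype ι] [DecidableEq ι] {P Q A : Submodule K V}
    (π : V →ₗ[K] V) (hπP : ∀ x ∈ P, π x = 0) (hπQ : ∀ x ∈ Q, π x = x)
    (hAP : A ⊓ P = ⊥) (hA : A ≤ P ⊔ Q)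
    (φ : ι → Module.Dual K V) (hφ : ∀ j, φ j ∈ P.dualAnnihilator)
    {a b : ι → V} (ha : LinearIndependent R a) (haA : ∀ i, a i ∈ A)
    (hb : ∀ i, b i ∈ P ⊔ Q)
    (γ : Kˣ) (hγ : (span R (Set.range b)).map (π.restrictScalars R)
      = (γ : K) • (span R (Set.range a)).map (π.restrictScalars R)) :
    ∃ u : Rˣ, (of fun i j => φ j (b i)).det
      = (γ : K) ^ Fintype.card ι * algebraMap R K u * (of fun i j => φ j (a i)).det := by
  have hφπ : ∀ j, ∀ x ∈ P ⊔ Q, φ j (π x) = φ j x := fun j x hx => by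
    have := (mem_dualAnnihilator _).mp (hφ j) _ (sub_apply_mem_of_mem_sup π hπP hπQ hx)
    rwa [map_sub, sub_eq_zero, eq_comm] at this
  have hdisj : Disjoint (span K (Set.range a)) (LinearMap.ker π) := by
    rw [disjoint_def]
    intro x hx hπx
    have hxA : x ∈ A := span_le.mpr (by rintro _ ⟨i, rfl⟩; exact haA i) hx
    have hxP : x ∈ P := by
      simpa [LinearMap.mem_ker.mp hπx] using sub_apply_mem_of_mem_sup π hπP hπQ (hA hxA)
    simpa [hAP] using mem_inf.mpr ⟨hxA, hxP⟩
  have hx : LinearIndependent R fun k => (γ : K) • π (a k) :=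
    ((((LinearIndependent.iff_fractionRing R K).mp ha).map hdisj).units_smul
      fun _ => γ).restrict_scalars' R
  have hspan :
      span R (Set.range (π ∘ b)) = span R (Set.range fun k => (γ : K) • π (a k)) := by
    rw [Set.range_smul, span_smul, Set.range_comp, show (fun k => π (a k)) = π ∘ a from rfl,
      Set.range_comp]
    simpa [map_span] using hγ
  obtain ⟨M, hM, hMb⟩ := exists_isUnit_det_of_span_eq hx hspan
  refine ⟨hM.unit, ?_⟩
  calc (of fun i j => φ j (b i)).det = (of fun i j => φ j (π (b i))).det := by
        simp only [hφπ _ _ (hb _)]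
    _ = algebraMap R K M.det * (of fun i j => φ j ((γ : K) • π (a i))).det :=
        det_eval_eq_det_mul_det_eval φ M hMb
    _ = algebraMap R K M.det * ((γ : K) ^ Fintype.card ι * (of fun i j => φ j (a i)).det) := by
        rw [← det_smul]
        congr 2
        ext i j
        simp [hφπ _ _ (hA (haA i))]
    _ = _ := by rw [IsUnit.unit_spec]; ring

end

section

variable {K : Type*} [Field K] {v : K → ℤ}
  (hv : ∀ x y : K, x ≠ 0 → y ≠ 0 → v (x * y) = v x + v y)
include hv

theorem map_div_eq_sub_of_map_mul {x y : K} (hx : x ≠ 0) (hy : y ≠ 0) :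
    v (x / y) = v x - v y := by
  have := hv (x / y) y (div_ne_zero hx hy) hy
  rw [div_mul_cancel₀ x hy] at this
  omega

theorem map_pow_mul_eq_of_map_mul {c u : K} (hc : c ≠ 0) (hu : u ≠ 0) (n : ℕ) :
    v (c ^ n * u) = n * v c + v u := by
  induction n with
  | zero => simp
  | succ n ih =>
    rw [pow_succ', mul_assoc, hv _ _ hc (mul_ne_zero (pow_ne_zero n hc) hu), ih]
    push_cast
    ring

theorem map_pow_mul_div_pow_mul_of_map_mul {c d x y : K} (hc : c ≠ 0) (hd : d ≠ 0)
    (hx : x ≠ 0) (hy : y ≠ 0) (n : ℕ) :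
    v (c ^ n * x / (d ^ n * y)) = n * v (c / d) + v x - v y := by
  rw [map_div_eq_sub_of_map_mul hv (mul_ne_zero (pow_ne_zero n hc) hx)
      (mul_ne_zero (pow_ne_zero n hd) hy), map_pow_mul_eq_of_map_mul hv hc hx,
    map_pow_mul_eq_of_map_mul hv hd hy, map_div_eq_sub_of_map_mul hv hc hd]
  ring

end

theorem stmt8_general {R : Type*} [CommRing R]
    {K : Type*} [Field K] [Algebra R K] [IsFractionRing R K]
    (v : K → ℤ) (hv : ∀ x y : K, x ≠ 0 → y ≠ 0 → v (x * y) = v x + v y)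
    (hvR : ∀ u : Rˣ, v (algebraMap R K u) = 0)
    {V : Type*} [AddCommGroup V] [Module K V] [Module R V] [IsScalarTower R K V]
    [SMulCommClass K R V] [FiniteDimensional K V]
    (n p q : ℕ) (hn : n = Module.finrank K V) (hpq : n = p + q)
    (C D C' D' A B : Submodule K V)
    (hC : Module.finrank K C = q) (hD : Module.finrank K D = q)
    -- `C'` is a complement of `C∩D` in `C`, `D'` a complement of `C∩D` in `D`
    (hC'1 : (C ⊓ D) ⊔ C' = C)
    (hD'1 : (C ⊓ D) ⊔ D' = D)
    (hAC : A ⊓ C = ⊥) (hAD : A ⊓ D = ⊥)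
    (hAsub : A ≤ C' ⊔ D') (hBsub : B ≤ C' ⊔ D')
    -- the projections onto `C'` and `D'` w.r.t. `V = (C∩D) ⊕ C' ⊕ D'`
    (pC' pD' : V →ₗ[K] V)
    (hpC'1 : ∀ x ∈ C', pC' x = x)
    (hpC'3 : ∀ x ∈ D', pC' x = 0)
    (hpD'1 : ∀ x ∈ D', pD' x = x)
    (hpD'3 : ∀ x ∈ C', pD' x = 0)
    -- full-rank lattices `L_A ⊆ A` and `L_B ⊆ B`
    (L_A L_B : Submodule R V)
    (hLA : L_A ≤ A.restrictScalars R) (hLB : L_B ≤ B.restrictScalars R)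
    (α β : Kˣ)
    (hα : Submodule.map (pC'.restrictScalars R) L_B = (α : K) • Submodule.map (pC'.restrictScalars R) L_A)
    (hβ : Submodule.map (pD'.restrictScalars R) L_B = (β : K) • Submodule.map (pD'.restrictScalars R) L_A)
    -- `R`-bases of the lattices `L_A` and `L_B`
    (a b : Fin p → V)
    (haInd : LinearIndependent R a) (haSpan : Submodule.span R (Set.range a) = L_A)
    (hbSpan : Submodule.span R (Set.range b) = L_B)
    -- bases of `(V/C)* = Ann(C)` and `(V/D)* = Ann(D)`
    (f g : Fin p → Module.Dual K V)
    (hfC : ∀ j, f j ∈ C.dualAnnihilator) (hfInd : LinearIndependent K f)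
    (hgD : ∀ j, g j ∈ D.dualAnnihilator) (hgInd : LinearIndependent K g) :
    v ((Matrix.of fun i j => f j (a i)).det * (Matrix.of fun i j => g j (b i)).det
        / ((Matrix.of fun i j => f j (b i)).det * (Matrix.of fun i j => g j (a i)).det))
    = p * v ((α : K) / (β : K)) := by
  subst haSpan hbSpan
  have hC'C : C' ≤ C := hC'1 ▸ le_sup_right
  have hD'D : D' ≤ D := hD'1 ▸ le_sup_right
  have haA : ∀ i, a i ∈ A := fun i => hLA (Submodule.subset_span (Set.mem_range_self i))
  have hb : ∀ i, b i ∈ C' ⊔ D' := fun i =>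
    hBsub (hLB (Submodule.subset_span (Set.mem_range_self i)))
  obtain ⟨u, hfb⟩ := exists_unit_det_eval_eq pD' hpD'3 hpD'1
    (eq_bot_mono (inf_le_inf_left A hC'C) hAC) hAsub f
    (fun j => Submodule.dualAnnihilator_anti hC'C (hfC j)) haInd haA hb β hβ
  obtain ⟨w, hgb⟩ := exists_unit_det_eval_eq pC' hpC'3 hpC'1
    (eq_bot_mono (inf_le_inf_left A hD'D) hAD) (sup_comm C' D' ▸ hAsub) g
    (fun j => Submodule.dualAnnihilator_anti hD'D (hgD j)) haInd haA
    (fun i => sup_comm C' D' ▸ hb i) α hα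
  have haK := (LinearIndependent.iff_fractionRing R K).mp haInd
  have hfa := det_eval_ne_zero (by rw [Fintype.card_fin, hC]; omega) hAC hfC hfInd haK haA
  have hga := det_eval_ne_zero (by rw [Fintype.card_fin, hD]; omega) hAD hgD hgInd haK haA
  have hu := (u.isUnit.map (algebraMap R K)).ne_zero
  have hw := (w.isUnit.map (algebraMap R K)).ne_zero
  have hratio : (of fun i j => f j (a i)).det * (of fun i j => g j (b i)).det
      / ((of fun i j => f j (b i)).det * (of fun i j => g j (a i)).det)
      = α ^ p * algebraMap R K w / (β ^ p * algebraMap R K u) := by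
    rw [hfb, hgb, Fintype.card_fin]
    field_simp
  rw [hratio, map_pow_mul_div_pow_mul_of_map_mul hv α.ne_zero β.ne_zero hw hu, hvR, hvR]
  ring

/-- with `V = (C∩D) ⊕ C' ⊕ D'`, `A, B ⊆ C'⊕D'` of dimension `p`,
lattices `L_A, L_B` with `p_{C'}(L_B) = α·p_{C'}(L_A)`, `p_{D'}(L_B) = β·p_{D'}(L_A)`,
the intersection number
`v( det(f_j(a_i))·det(g_j(b_i)) / (det(f_j(b_i))·det(g_j(a_i))) )` equals `p·v(α/β)`. -/
theorem stmt8 {R : Type*} [CommRing R] [IsDomain R] [IsDiscreteValuationRing R]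
    {K : Type*} [Field K] [Algebra R K] [IsFractionRing R K]
    (v : K → ℤ) (hv : ∀ x y : K, x ≠ 0 → y ≠ 0 → v (x * y) = v x + v y)
    (hvR : ∀ u : Rˣ, v (algebraMap R K u) = 0)
    {V : Type*} [AddCommGroup V] [Module K V] [Module R V] [IsScalarTower R K V]
    [SMulCommClass K R V] [FiniteDimensional K V]
    (n p q : ℕ) (hn : n = Module.finrank K V) (hpq : n = p + q) (hp : 1 ≤ p) (hq : p ≤ q)
    (C D C' D' A B : Submodule K V)
    (hC : Module.finrank K C = q) (hD : Module.finrank K D = q)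
    (hA : Module.finrank K A = p) (hB : Module.finrank K B = p)
    (hCD : C ⊔ D = ⊤)
    -- `C'` is a complement of `C∩D` in `C`, `D'` a complement of `C∩D` in `D`
    (hC'1 : (C ⊓ D) ⊔ C' = C) (hC'2 : (C ⊓ D) ⊓ C' = ⊥)
    (hD'1 : (C ⊓ D) ⊔ D' = D) (hD'2 : (C ⊓ D) ⊓ D' = ⊥)
    (hAC : A ⊓ C = ⊥) (hAD : A ⊓ D = ⊥) (hBC : B ⊓ C = ⊥) (hBD : B ⊓ D = ⊥)
    (hAsub : A ≤ C' ⊔ D') (hBsub : B ≤ C' ⊔ D')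
    -- the projections onto `C'` and `D'` w.r.t. `V = (C∩D) ⊕ C' ⊕ D'`
    (pC' pD' : V →ₗ[K] V)
    (hpC'1 : ∀ x ∈ C', pC' x = x) (hpC'2 : ∀ x ∈ C ⊓ D, pC' x = 0)
    (hpC'3 : ∀ x ∈ D', pC' x = 0)
    (hpD'1 : ∀ x ∈ D', pD' x = x) (hpD'2 : ∀ x ∈ C ⊓ D, pD' x = 0)
    (hpD'3 : ∀ x ∈ C', pD' x = 0)
    -- full-rank lattices `L_A ⊆ A` and `L_B ⊆ B`
    (L_A L_B : Submodule R V)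
    (hLA : L_A ≤ A.restrictScalars R) (hLB : L_B ≤ B.restrictScalars R)
    (α β : Kˣ)
    (hα : Submodule.map (pC'.restrictScalars R) L_B = (α : K) • Submodule.map (pC'.restrictScalars R) L_A)
    (hβ : Submodule.map (pD'.restrictScalars R) L_B = (β : K) • Submodule.map (pD'.restrictScalars R) L_A)
    -- `R`-bases of the lattices `L_A` and `L_B`
    (a b : Fin p → V)
    (haInd : LinearIndependent R a) (haSpan : Submodule.span R (Set.range a) = L_A)
    (hbInd : LinearIndependent R b) (hbSpan : Submodule.span R (Set.range b) = L_B)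
    -- bases of `(V/C)* = Ann(C)` and `(V/D)* = Ann(D)`
    (f g : Fin p → Module.Dual K V)
    (hfC : ∀ j, f j ∈ C.dualAnnihilator) (hfInd : LinearIndependent K f)
    (hgD : ∀ j, g j ∈ D.dualAnnihilator) (hgInd : LinearIndependent K g) :
    v ((Matrix.of fun i j => f j (a i)).det * (Matrix.of fun i j => g j (b i)).det
        / ((Matrix.of fun i j => f j (b i)).det * (Matrix.of fun i j => g j (a i)).det))
    = p * v ((α : K) / (β : K)) :=
  stmt8_general v hv hvR n p q hn hpq C D C' D' A B hC hD hC'1 hD'1 hAC hAD hAsub hBsub pC' pD'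
    hpC'1 hpC'3 hpD'1 hpD'3 L_A L_B hLA hLB α β hα hβ a b haInd haSpan hbSpan f g hfC hfInd hgD
    hgInd
end

section
/- Any abelian subspace a of the space p of Hermitian trace-zero complex n×n matrices is simultaneously diagonalizable by a unitary matrix: there exists k ∈ SU(n) such that k a k^{-1} is contained in the space of real diagonal trace-zero matrices. Consequently every maximal abelian subspace of p is conjugate under SU(n) to the space of real diagonal trace-zero matrices. -/
open Matrix

open Matrix

lemma aux_conj_diag {n : ℕ} (b : OrthonormalBasis (Fin n) ℂ (EuclideanSpace ℂ (Fin n)))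
    (X : Matrix (Fin n) (Fin n) ℂ) (d : Fin n → ℂ)
    (h : ∀ j, X *ᵥ ⇑(b j) = d j • ⇑(b j)) :
    star ((EuclideanSpace.basisFun (Fin n) ℂ).toBasis.toMatrix b.toBasis) * X *
      ((EuclideanSpace.basisFun (Fin n) ℂ).toBasis.toMatrix b.toBasis) = diagonal d := by
  set V := (EuclideanSpace.basisFun (Fin n) ℂ).toBasis.toMatrix b.toBasis with hV
  have hVmem : V ∈ Matrix.unitaryGroup (Fin n) ℂ :=
    (EuclideanSpace.basisFun (Fin n) ℂ).toMatrix_orthonormalBasis_mem_unitary b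
  have happ : ∀ i j, V i j = b j i := fun i j => rfl
  have hmulvec : ∀ j, V *ᵥ Pi.single j 1 = ⇑(b j) := by
    intro j
    simp only [mulVec_single, MulOpposite.op_one, one_smul]
    ext i
    exact happ i j
  have hstar : ∀ j, (star V) *ᵥ ⇑(b j) = Pi.single j 1 := by
    intro j
    rw [← hmulvec, mulVec_mulVec, (Matrix.mem_unitaryGroup_iff').mp hVmem, one_mulVec]
  apply Matrix.toEuclideanLin.injective
  apply Module.Basis.ext (EuclideanSpace.basisFun (Fin n) ℂ).toBasis
  intro i
  simp only [toEuclideanLin_apply, OrthonormalBasis.coe_toBasis, EuclideanSpace.basisFun_apply,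
    EuclideanSpace.ofLp_single, ← mulVec_mulVec, hmulvec, h, mulVec_smul, hstar,
    WithLp.toLp_smul, PiLp.toLp_single, diagonal_mulVec_single, mul_one]
  apply PiLp.ext
  intro j
  simp only [PiLp.smul_apply, EuclideanSpace.single_apply, smul_eq_mul, mul_ite, mul_one, mul_zero]

open Matrix Module.End
set_option maxHeartbeats 1000000 in
lemma aux_fam {n m : ℕ} (M : Fin m → Matrix (Fin n) (Fin n) ℂ)
    (hherm : ∀ i, (M i).IsHermitian) (hcomm : ∀ i j, Commute (M i) (M j)) :
    ∃ b : OrthonormalBasis (Fin n) ℂ (EuclideanSpace ℂ (Fin n)),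
      ∀ j, ∃ χ : Fin m → ℂ, ∀ i, (M i) *ᵥ ⇑(b j) = χ i • ⇑(b j) := by
  classical
  let T : Fin m → (EuclideanSpace ℂ (Fin n) →ₗ[ℂ] EuclideanSpace ℂ (Fin n)) :=
    fun i => Matrix.toEuclideanLin (M i)
  have hsym : ∀ i, (T i).IsSymmetric := fun i =>
    (Matrix.isHermitian_iff_isSymmetric).1 (hherm i)
  have hpair : Pairwise (Function.onFun Commute T) := by
    intro i j _
    show T i * T j = T j * T i
    ext v
    simp only [Function.comp, T, Module.End.mul_apply, Matrix.toEuclideanLin_apply,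
      Equiv.apply_symm_apply, Matrix.mulVec_mulVec]
    rw [hcomm i j]
  set W : (Fin m → ℂ) → Submodule ℂ (EuclideanSpace ℂ (Fin n)) :=
    fun χ => ⨅ i, eigenspace (T i) (χ i) with hW
  have hInt : DirectSum.IsInternal W :=
    LinearMap.IsSymmetric.LinearMap.IsSymmetric.directSum_isInternal_of_pairwise_commute hsym hpair
  haveI : Fintype {χ : Fin m → ℂ // W χ ≠ ⊥} :=
    hInt.submodule_iSupIndep.fintypeNeBotOfFiniteDimensional
  have hInt' : DirectSum.IsInternal (fun χ : {χ : Fin m → ℂ // W χ ≠ ⊥} => W χ.1) :=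
    DirectSum.isInternal_ne_bot_iff.mpr hInt
  have horth := LinearMap.IsSymmetric.orthogonalFamily_iInf_eigenspaces hsym
  have horth' := horth.comp
    (Subtype.coe_injective : Function.Injective ((↑) : {χ : Fin m → ℂ // W χ ≠ ⊥} → (Fin m → ℂ)))
  have hrank : Module.finrank ℂ (EuclideanSpace ℂ (Fin n)) = n := finrank_euclideanSpace_fin
  refine ⟨hInt'.subordinateOrthonormalBasis hrank horth', ?_⟩
  intro j
  refine ⟨(hInt'.subordinateOrthonormalBasisIndex hrank j horth').1, ?_⟩
  intro i
  have hmem : hInt'.subordinateOrthonormalBasis hrank horth' j ∈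
      W (hInt'.subordinateOrthonormalBasisIndex hrank j horth').1 :=
    hInt'.subordinateOrthonormalBasis_subordinate hrank j horth'
  have := mem_eigenspace_iff.1 ((Submodule.mem_iInf _).1 hmem i)
  have h2 := congrArg (WithLp.equiv 2 (Fin n → ℂ)) this
  simpa [Matrix.ofLp_toEuclideanLin_apply, T] using h2

open Matrix in
lemma aux_simul (n : ℕ) (a : Submodule ℝ (Matrix (Fin n) (Fin n) ℂ))
    (hherm : ∀ X ∈ a, Xᴴ = X)
    (hcomm : ∀ X ∈ a, ∀ Y ∈ a, Commute X Y) :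
    ∃ V ∈ Matrix.unitaryGroup (Fin n) ℂ, ∀ X ∈ a, ∃ d : Fin n → ℂ,
      star V * X * V = Matrix.diagonal d := by
  classical
  let B : Module.Basis (Fin (Module.finrank ℝ a)) ℝ a := Module.finBasis ℝ a
  obtain ⟨b, hb⟩ := aux_fam (fun i => (B i : Matrix (Fin n) (Fin n) ℂ))
    (fun i => hherm _ (B i).2) (fun i j => hcomm _ (B i).2 _ (B j).2)
  choose χ hχ using hb
  refine ⟨_, (EuclideanSpace.basisFun (Fin n) ℂ).toMatrix_orthonormalBasis_mem_unitary b, ?_⟩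
  intro X hX
  refine ⟨fun j => ∑ i, (B.repr ⟨X, hX⟩ i : ℂ) * χ j i, aux_conj_diag b X _ ?_⟩
  intro j
  have hsmul : ∀ (r : ℝ) (A : Matrix (Fin n) (Fin n) ℂ), r • A = (r : ℂ) • A := by
    intro r A
    rw [← algebraMap_smul ℂ r A]
    norm_num
  have hXsum : X = ∑ i, (B.repr ⟨X, hX⟩ i : ℂ) • (B i : Matrix (Fin n) (Fin n) ℂ) := by
    have h1 := B.sum_repr ⟨X, hX⟩
    have h2 := congrArg (Submodule.subtype a) h1
    simp only [map_sum, Submodule.coe_subtype, SetLike.val_smul] at h2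
    exact h2.symm.trans (Finset.sum_congr rfl fun i _ => hsmul _ _)
  conv_lhs => rw [hXsum, ← Matrix.toLin'_apply]
  rw [map_sum, LinearMap.sum_apply]
  simp only [Matrix.toLin'_apply, Matrix.smul_mulVec, hχ, smul_smul]
  rw [← Finset.sum_smul]

open Matrix in
lemma aux_herm_of_diag {n : ℕ} {M : Matrix (Fin n) (Fin n) ℂ}
    (h1 : M.IsDiag) (h2 : ∀ i, (M i i).im = 0) : star M = M := by
  rw [Matrix.star_eq_conjTranspose]
  ext i j
  by_cases hij : i = j
  · subst hij
    simp only [conjTranspose_apply]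
    exact (Complex.conj_eq_iff_im.2 (h2 i))
  · simp only [conjTranspose_apply, h1 (Ne.symm hij), h1 hij, star_zero]

open Matrix in
lemma aux_diag_comm {n : ℕ} {M N : Matrix (Fin n) (Fin n) ℂ}
    (h1 : M.IsDiag) (h2 : N.IsDiag) : M * N = N * M := by
  rw [← h1.diagonal_diag, ← h2.diagonal_diag, diagonal_mul_diagonal, diagonal_mul_diagonal]
  exact congrArg Matrix.diagonal (funext fun i => mul_comm _ _)

open Matrix in
lemma aux_su (n : ℕ) (hn : 1 ≤ n) (V : Matrix (Fin n) (Fin n) ℂ)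
    (hV : V ∈ Matrix.unitaryGroup (Fin n) ℂ) :
    ∃ k ∈ Matrix.specialUnitaryGroup (Fin n) ℂ,
      ∀ (X : Matrix (Fin n) (Fin n) ℂ) (d : Fin n → ℂ),
        star V * X * V = Matrix.diagonal d → k * X * k⁻¹ = Matrix.diagonal d := by
  have hcc : V.det * star V.det = 1 := by
    have h1 := congrArg Matrix.det ((Matrix.mem_unitaryGroup_iff).1 hV)
    rwa [Matrix.det_mul, Matrix.star_eq_conjTranspose, Matrix.det_conjTranspose,
      Matrix.det_one] at h1
  obtain ⟨g, hgg, hgprod⟩ : ∃ g : Fin n → ℂ,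
      (∀ i, g i * star (g i) = 1) ∧ (∏ i, g i) = V.det := by
    refine ⟨fun i => if i = ⟨0, hn⟩ then V.det else 1, ?_, ?_⟩
    · intro i
      by_cases h : i = ⟨0, hn⟩
      · simpa [h] using hcc
      · simp [h]
    · simp [Finset.prod_ite_eq']
  have hdg : star (Matrix.diagonal g) = Matrix.diagonal (fun i => star (g i)) := by
    rw [Matrix.star_eq_conjTranspose, Matrix.diagonal_conjTranspose]
    rfl
  have hdgU : Matrix.diagonal g ∈ Matrix.unitaryGroup (Fin n) ℂ := by
    rw [Matrix.mem_unitaryGroup_iff, hdg, Matrix.diagonal_mul_diagonal, ← Matrix.diagonal_one]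
    exact congrArg Matrix.diagonal (funext fun i => hgg i)
  have hkU : Matrix.diagonal g * star V ∈ Matrix.unitaryGroup (Fin n) ℂ :=
    mul_mem hdgU (Unitary.star_mem hV)
  have hkinv : (Matrix.diagonal g * star V)⁻¹ = star (Matrix.diagonal g * star V) :=
    Matrix.inv_eq_left_inv ((Matrix.mem_unitaryGroup_iff').1 hkU)
  refine ⟨Matrix.diagonal g * star V, ?_, ?_⟩
  · rw [Matrix.mem_specialUnitaryGroup_iff]
    refine ⟨hkU, ?_⟩
    rw [Matrix.det_mul, Matrix.det_diagonal, hgprod, Matrix.star_eq_conjTranspose,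
      Matrix.det_conjTranspose]
    exact hcc
  · intro X d hd
    rw [hkinv, Matrix.star_mul, star_star, hdg]
    have hassoc : Matrix.diagonal g * star V * X * (V * Matrix.diagonal fun i => star (g i))
        = Matrix.diagonal g * (star V * X * V) * Matrix.diagonal fun i => star (g i) := by
      simp only [Matrix.mul_assoc]
    rw [hassoc, hd, Matrix.diagonal_mul_diagonal, Matrix.diagonal_mul_diagonal]
    exact congrArg Matrix.diagonal (funext fun i => by
      rw [show g i * d i * star (g i) = d i * (g i * star (g i)) by ring, hgg i, mul_one])

/-- any abelian real subspace `a` of the Hermitian trace-zero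
matrices is simultaneously diagonalized by some `k ∈ SU(n)` (with real diagonal
entries); consequently any maximal such subspace is conjugate under `SU(n)` to the
space of real diagonal trace-zero matrices. -/
theorem stmt11 (n : ℕ) (hn : 1 ≤ n)
    (a : Submodule ℝ (Matrix (Fin n) (Fin n) ℂ))
    (hherm : ∀ X ∈ a, Xᴴ = X) (htr : ∀ X ∈ a, X.trace = 0)
    (hcomm : ∀ X ∈ a, ∀ Y ∈ a, Commute X Y) :
    (∃ k ∈ Matrix.specialUnitaryGroup (Fin n) ℂ, ∀ X ∈ a,
      (k * X * k⁻¹).IsDiag ∧ ∀ i, ((k * X * k⁻¹) i i).im = 0) ∧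
    -- if moreover `a` is maximal among such abelian subspaces, it is conjugate to
    -- the space of real diagonal trace-zero matrices
    ((∀ b : Submodule ℝ (Matrix (Fin n) (Fin n) ℂ),
        (∀ X ∈ b, Xᴴ = X) → (∀ X ∈ b, X.trace = 0) →
        (∀ X ∈ b, ∀ Y ∈ b, Commute X Y) → a ≤ b → b = a) →
      ∃ k ∈ Matrix.specialUnitaryGroup (Fin n) ℂ,
        {Y : Matrix (Fin n) (Fin n) ℂ | ∃ X ∈ a, Y = k * X * k⁻¹}
          = {D : Matrix (Fin n) (Fin n) ℂ |
              D.IsDiag ∧ (∀ i, (D i i).im = 0) ∧ D.trace = 0}) := by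
  classical
  obtain ⟨V, hV, hVdiag⟩ := aux_simul n a hherm hcomm
  obtain ⟨k, hkSU, hkdiag⟩ := aux_su n hn V hV
  have hkU : k ∈ Matrix.unitaryGroup (Fin n) ℂ :=
    ((Matrix.mem_specialUnitaryGroup_iff).1 hkSU).1
  have hk1 : k * star k = 1 := (Matrix.mem_unitaryGroup_iff).1 hkU
  have hk1' : star k * k = 1 := (Matrix.mem_unitaryGroup_iff').1 hkU
  have hkinv : k⁻¹ = star k := Matrix.inv_eq_left_inv hk1'
  have hconj : ∀ X ∈ a, ∃ d : Fin n → ℂ, k * X * k⁻¹ = Matrix.diagonal d := by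
    intro X hX
    obtain ⟨d, hd⟩ := hVdiag X hX
    exact ⟨d, hkdiag X d hd⟩
  have hstarconj : ∀ X : Matrix (Fin n) (Fin n) ℂ, star X = X →
      star (k * X * star k) = k * X * star k := by
    intro X hXs
    rw [Matrix.star_mul, Matrix.star_mul, star_star, hXs]
    exact (Matrix.mul_assoc _ _ _).symm
  have hreal : ∀ X ∈ a, (k * X * k⁻¹).IsDiag ∧ ∀ i, ((k * X * k⁻¹) i i).im = 0 := by
    intro X hX
    obtain ⟨d, hd⟩ := hconj X hX
    have hH : star (k * X * k⁻¹) = k * X * k⁻¹ := by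
      rw [hkinv]
      exact hstarconj X (by rw [Matrix.star_eq_conjTranspose, hherm X hX])
    constructor
    · rw [hd]; exact Matrix.isDiag_diagonal d
    · intro i
      have h3 : star ((k * X * k⁻¹) i i) = (k * X * k⁻¹) i i := by
        have h4 := congrFun (congrFun hH i) i
        rwa [Matrix.star_apply] at h4
      exact Complex.conj_eq_iff_im.1 h3
  refine ⟨⟨k, hkSU, hreal⟩, ?_⟩
  intro hmax
  refine ⟨k, hkSU, ?_⟩
  have hcomp1 : ∀ M : Matrix (Fin n) (Fin n) ℂ, k * (star k * M * k) * star k = M := by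
    intro M
    simp only [← Matrix.mul_assoc]
    rw [hk1, Matrix.one_mul, Matrix.mul_assoc, hk1, Matrix.mul_one]
  have hcomp2 : ∀ M : Matrix (Fin n) (Fin n) ℂ, star k * (k * M * star k) * k = M := by
    intro M
    simp only [← Matrix.mul_assoc]
    rw [hk1', Matrix.one_mul, Matrix.mul_assoc, hk1', Matrix.mul_one]
  have htrconj : ∀ M : Matrix (Fin n) (Fin n) ℂ, (k * M * star k).trace = M.trace := by
    intro M
    rw [Matrix.trace_mul_comm, ← Matrix.mul_assoc, hk1', Matrix.one_mul]
  let b : Submodule ℝ (Matrix (Fin n) (Fin n) ℂ) :=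
    { carrier := {X | (k * X * star k).IsDiag ∧ (∀ i, ((k * X * star k) i i).im = 0) ∧
        (k * X * star k).trace = 0}
      add_mem' := by
        rintro x y ⟨hx1, hx2, hx3⟩ ⟨hy1, hy2, hy3⟩
        have hxy : k * (x + y) * star k = k * x * star k + k * y * star k := by
          rw [Matrix.mul_add, Matrix.add_mul]
        refine ⟨?_, ?_, ?_⟩
        · rw [hxy]; exact hx1.add hy1
        · intro i
          rw [hxy]
          simp only [Matrix.add_apply, Complex.add_im, hx2 i, hy2 i, add_zero]
        · rw [hxy, Matrix.trace_add, hx3, hy3, add_zero]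
      zero_mem' := by
        simp
      smul_mem' := by
        rintro r x ⟨hx1, hx2, hx3⟩
        have hxy : k * (r • x) * star k = r • (k * x * star k) := by
          rw [Matrix.mul_smul, Matrix.smul_mul]
        refine ⟨?_, ?_, ?_⟩
        · rw [hxy]; exact hx1.smul r
        · intro i
          rw [hxy]
          simp only [Matrix.smul_apply]
          rw [Complex.smul_im, hx2 i, smul_zero]
        · rw [hxy, Matrix.trace_smul, hx3, smul_zero] }
  have hmemb : ∀ X, X ∈ b ↔ (k * X * star k).IsDiag ∧ (∀ i, ((k * X * star k) i i).im = 0) ∧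
      (k * X * star k).trace = 0 := fun X => Iff.rfl
  have hba : b = a := by
    apply hmax b
    · -- hermitian
      intro X hX
      obtain ⟨h1, h2, _⟩ := (hmemb X).1 hX
      have hM : star (k * X * star k) = k * X * star k := aux_herm_of_diag h1 h2
      have hXeq : X = star k * (k * X * star k) * k := (hcomp2 X).symm
      have hXs : star X = X := by
        conv_lhs => rw [hXeq]
        rw [Matrix.star_mul, Matrix.star_mul, star_star, hM, ← Matrix.mul_assoc, ← hXeq]
      rw [← Matrix.star_eq_conjTranspose]
      exact hXs
    · -- trace
      intro X hX
      obtain ⟨_, _, h3⟩ := (hmemb X).1 hX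
      rw [← htrconj X]
      exact h3
    · -- commute
      intro X hX Y hY
      obtain ⟨h1, _, _⟩ := (hmemb X).1 hX
      obtain ⟨h1', _, _⟩ := (hmemb Y).1 hY
      have hXeq : X = star k * (k * X * star k) * k := (hcomp2 X).symm
      have hYeq : Y = star k * (k * Y * star k) * k := (hcomp2 Y).symm
      have key : ∀ M N : Matrix (Fin n) (Fin n) ℂ,
          (star k * M * k) * (star k * N * k) = star k * (M * N) * k := by
        intro M N
        simp only [← Matrix.mul_assoc]
        rw [Matrix.mul_assoc (star k * M), hk1, Matrix.mul_one]
      show X * Y = Y * X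
      conv_lhs => rw [hXeq, hYeq]
      conv_rhs => rw [hXeq, hYeq]
      rw [key, key, aux_diag_comm h1 h1']
    · -- a ≤ b
      intro X hX
      obtain ⟨hd1, hd2⟩ := hreal X hX
      rw [hkinv] at hd1 hd2
      exact (hmemb X).2 ⟨hd1, hd2, by rw [htrconj, htr X hX]⟩
  ext Y
  simp only [Set.mem_setOf_eq]
  constructor
  · rintro ⟨X, hX, rfl⟩
    obtain ⟨hd1, hd2⟩ := hreal X hX
    refine ⟨hd1, hd2, ?_⟩
    rw [hkinv, htrconj, htr X hX]
  · rintro ⟨h1, h2, h3⟩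
    refine ⟨star k * Y * k, ?_, ?_⟩
    · rw [← hba]
      exact (hmemb _).2 (by rw [hcomp1 Y]; exact ⟨h1, h2, h3⟩)
    · rw [hkinv, hcomp1 Y]
end

section
/- Let n = p + q with 1 ≤ p ≤ q, ρ = √(q/(4pn²)), σ = -(p/q)ρ, and α, β > 0. For t ∈ ℝ set c = (β²e^{-2tρ} + α²e^{-2tσ})^{1/2} and let k be the block matrix with blocks ((β/c)e^{-tρ} I_p, -(α/c)e^{-tσ} I_p; (α/c)e^{-tσ} I_p, (β/c)e^{-tρ} I_p) extended by I_{q-p}. Then k ∈ SU(n), and Tr( k·D·k^{-1}·D ) = (ρ²/(c²q²))·( pqn β² e^{-2tρ} − p²n α² e^{-2tσ} ), where D = diag(ρI_p, σI_q). In particular Tr(k D k^{-1} D) = 0 if and only if e^{-2tρ+2tσ} = pα²/(qβ²), i.e. t = (q/(2nρ))·log(qβ²/(pα²)). -/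
open Matrix

section helpers
variable {m m' : Type*} [Fintype m] [DecidableEq m] [Fintype m'] [DecidableEq m']

omit [DecidableEq m] [DecidableEq m'] in
lemma my_trace_fromBlocks (A : Matrix m m ℂ) (B : Matrix m m' ℂ) (C : Matrix m' m ℂ)
    (Dm : Matrix m' m' ℂ) :
    (fromBlocks A B C Dm).trace = A.trace + Dm.trace := by
  simp [Matrix.trace, Fintype.sum_sum_type, Matrix.diag]

omit [Fintype m'] [DecidableEq m'] in
lemma my_blk (a b c d a' b' c' d' : ℂ) :
    (fromBlocks (a • (1 : Matrix m m ℂ)) (b • (1 : Matrix m m ℂ))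
        (c • (1 : Matrix m m ℂ)) (d • (1 : Matrix m m ℂ))) *
      (fromBlocks (a' • (1 : Matrix m m ℂ)) (b' • (1 : Matrix m m ℂ))
        (c' • (1 : Matrix m m ℂ)) (d' • (1 : Matrix m m ℂ))) =
    fromBlocks ((a * a' + b * c') • (1 : Matrix m m ℂ)) ((a * b' + b * d') • (1 : Matrix m m ℂ))
      ((c * a' + d * c') • (1 : Matrix m m ℂ)) ((c * b' + d * d') • (1 : Matrix m m ℂ)) := by
  simp [fromBlocks_multiply, smul_smul, add_smul, Matrix.smul_mul, Matrix.mul_smul, mul_comm]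

lemma my_rsmul {m n : Type*} (r : ℝ) (A : Matrix m n ℂ) : r • A = (r : ℂ) • A := by
  ext i j; simp [Matrix.smul_apply, Complex.real_smul]

end helpers

/-- the block matrix `k` is in `SU(n)` and
`Tr(k·D·k⁻¹·D) = (ρ²/(c²q²))·(pqnβ²e^{-2tρ} − p²nα²e^{-2tσ})`; in particular this
trace vanishes iff `e^{-2tρ+2tσ} = pα²/(qβ²)`, i.e. iff
`t = (q/(2nρ))·log(qβ²/(pα²))`. Indices: `n = p + q`, `q = p + s`. -/
theorem stmt16 (p s : ℕ) (hp : 1 ≤ p) (q : ℕ) (hq : q = p + s) (n : ℕ) (hn : n = p + q)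
    (ρ σ : ℝ)
    (hρ : ρ = Real.sqrt ((q : ℝ) / (4 * p * n ^ 2)))
    (hσ : σ = -((p : ℝ) / (q : ℝ)) * ρ)
    (α β : ℝ) (hα : 0 < α) (hβ : 0 < β) (t : ℝ)
    (c : ℝ)
    (hc : c = Real.sqrt (β ^ 2 * Real.exp (-2 * t * ρ) + α ^ 2 * Real.exp (-2 * t * σ)))
    (D : Matrix ((Fin p ⊕ Fin p) ⊕ Fin s) ((Fin p ⊕ Fin p) ⊕ Fin s) ℂ)
    (hD : D = Matrix.diagonal
      (Sum.elim (Sum.elim (fun _ => (ρ : ℂ)) (fun _ => (σ : ℂ))) (fun _ => (σ : ℂ))))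
    (k : Matrix ((Fin p ⊕ Fin p) ⊕ Fin s) ((Fin p ⊕ Fin p) ⊕ Fin s) ℂ)
    (hk : k = Matrix.fromBlocks
      (Matrix.fromBlocks
        (((β / c) * Real.exp (-t * ρ) : ℝ) • (1 : Matrix (Fin p) (Fin p) ℂ))
        ((-(α / c) * Real.exp (-t * σ) : ℝ) • (1 : Matrix (Fin p) (Fin p) ℂ))
        (((α / c) * Real.exp (-t * σ) : ℝ) • (1 : Matrix (Fin p) (Fin p) ℂ))
        (((β / c) * Real.exp (-t * ρ) : ℝ) • (1 : Matrix (Fin p) (Fin p) ℂ)))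
      0 0 (1 : Matrix (Fin s) (Fin s) ℂ)) :
    k ∈ Matrix.specialUnitaryGroup ((Fin p ⊕ Fin p) ⊕ Fin s) ℂ ∧
    (k * D * k⁻¹ * D).trace
      = ((ρ ^ 2 / (c ^ 2 * q ^ 2)) *
          (p * q * n * β ^ 2 * Real.exp (-2 * t * ρ)
            - p ^ 2 * n * α ^ 2 * Real.exp (-2 * t * σ)) : ℝ) ∧
    ((k * D * k⁻¹ * D).trace = 0 ↔
      Real.exp (-2 * t * ρ + 2 * t * σ) = p * α ^ 2 / (q * β ^ 2)) ∧
    ((k * D * k⁻¹ * D).trace = 0 ↔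
      t = ((q : ℝ) / (2 * n * ρ)) * Real.log (q * β ^ 2 / (p * α ^ 2))) := by
  -- basic positivity
  have hp0 : (0:ℝ) < p := by exact_mod_cast hp
  have hq0 : (0:ℝ) < q := by
    have : 1 ≤ q := hq ▸ le_add_right hp
    exact_mod_cast this
  have hn0 : (0:ℝ) < n := by
    have : 1 ≤ n := hn ▸ le_add_right hp
    exact_mod_cast this
  have hρ0 : 0 < ρ := by
    rw [hρ]; apply Real.sqrt_pos.mpr; positivity
  have hc0 : 0 < c := by
    rw [hc]; apply Real.sqrt_pos.mpr; positivity
  have hc2 : c ^ 2 = β ^ 2 * Real.exp (-2 * t * ρ) + α ^ 2 * Real.exp (-2 * t * σ) := by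
    rw [hc]; exact Real.sq_sqrt (by positivity)
  set a : ℝ := β / c * Real.exp (-t * ρ) with ha
  set b : ℝ := α / c * Real.exp (-t * σ) with hb
  have ha0 : 0 < a := by positivity
  have hexρ : Real.exp (-t * ρ) ^ 2 = Real.exp (-2 * t * ρ) := by
    rw [sq, ← Real.exp_add]; ring_nf
  have hexσ : Real.exp (-t * σ) ^ 2 = Real.exp (-2 * t * σ) := by
    rw [sq, ← Real.exp_add]; ring_nf
  have ha2 : a ^ 2 * c ^ 2 = β ^ 2 * Real.exp (-2 * t * ρ) := by
    rw [ha, ← hexρ]; field_simp; try ring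
  have hb2 : b ^ 2 * c ^ 2 = α ^ 2 * Real.exp (-2 * t * σ) := by
    rw [hb, ← hexσ]; field_simp; try ring
  have hab : a ^ 2 + b ^ 2 = 1 := by
    have h := hc2
    have : a ^ 2 * c ^ 2 + b ^ 2 * c ^ 2 = c ^ 2 := by rw [ha2, hb2, h]
    have hc2ne : c ^ 2 ≠ 0 := by positivity
    have h2 : (a ^ 2 + b ^ 2) * c ^ 2 = 1 * c ^ 2 := by linarith
    exact mul_right_cancel₀ hc2ne h2
  -- complex scalars
  set A : ℂ := (a : ℂ) with hA
  set B : ℂ := (b : ℂ) with hB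
  have hA0 : A ≠ 0 := by
    simp [hA, Complex.ofReal_eq_zero]; exact ne_of_gt ha0
  have hABsq : A * A + B * B = 1 := by
    rw [hA, hB]; push_cast
    have : ((a^2 + b^2 : ℝ) : ℂ) = 1 := by rw [hab]; norm_num
    push_cast at this; linear_combination this
  -- matrix shapes
  have hneg : (-(α / c) * Real.exp (-t * σ) : ℝ) = -b := by rw [hb]; ring
  have hk2 : k = fromBlocks
      (fromBlocks (A • (1 : Matrix (Fin p) (Fin p) ℂ)) ((-B) • (1 : Matrix (Fin p) (Fin p) ℂ))
        (B • (1 : Matrix (Fin p) (Fin p) ℂ)) (A • (1 : Matrix (Fin p) (Fin p) ℂ)))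
      0 0 (1 : Matrix (Fin s) (Fin s) ℂ) := by
    rw [hk, hneg]
    simp only [my_rsmul, hA, hB]
    push_cast
    rfl
  have hD2 : D = fromBlocks
      (fromBlocks ((ρ:ℂ) • (1 : Matrix (Fin p) (Fin p) ℂ)) ((0:ℂ) • (1 : Matrix (Fin p) (Fin p) ℂ))
        ((0:ℂ) • (1 : Matrix (Fin p) (Fin p) ℂ)) ((σ:ℂ) • (1 : Matrix (Fin p) (Fin p) ℂ)))
      0 0 ((σ:ℂ) • (1 : Matrix (Fin s) (Fin s) ℂ)) := by
    rw [hD, ← fromBlocks_diagonal, ← fromBlocks_diagonal]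
    simp [smul_one_eq_diagonal]
  have hkH : kᴴ = fromBlocks
      (fromBlocks (A • (1 : Matrix (Fin p) (Fin p) ℂ)) (B • (1 : Matrix (Fin p) (Fin p) ℂ))
        ((-B) • (1 : Matrix (Fin p) (Fin p) ℂ)) (A • (1 : Matrix (Fin p) (Fin p) ℂ)))
      0 0 (1 : Matrix (Fin s) (Fin s) ℂ) := by
    rw [hk2]
    simp [fromBlocks_conjTranspose, conjTranspose_smul, hA, hB, Complex.star_def,
      Complex.conj_ofReal]
  -- unitarity
  have hMM : (fromBlocks (A • (1 : Matrix (Fin p) (Fin p) ℂ)) (B • (1 : Matrix (Fin p) (Fin p) ℂ))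
        ((-B) • (1 : Matrix (Fin p) (Fin p) ℂ)) (A • (1 : Matrix (Fin p) (Fin p) ℂ))) *
      (fromBlocks (A • (1 : Matrix (Fin p) (Fin p) ℂ)) ((-B) • (1 : Matrix (Fin p) (Fin p) ℂ))
        (B • (1 : Matrix (Fin p) (Fin p) ℂ)) (A • (1 : Matrix (Fin p) (Fin p) ℂ))) = 1 := by
    rw [my_blk]
    have e1 : A * A + B * B = 1 := hABsq
    have e2 : A * (-B) + B * A = 0 := by ring
    have e3 : (-B) * A + A * B = 0 := by ring
    have e4 : (-B) * (-B) + A * A = 1 := by linear_combination hABsq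
    rw [e1, e2, e3, e4]
    simp [fromBlocks_one]
  have h1 : kᴴ * k = 1 := by
    rw [hkH, hk2, fromBlocks_multiply]
    simp only [Matrix.mul_zero, Matrix.zero_mul, Matrix.mul_one, Matrix.one_mul, add_zero,
      zero_add]
    rw [hMM]
    exact fromBlocks_one
  have hinv : k⁻¹ = kᴴ := inv_eq_left_inv h1
  -- determinant
  have hAE : A * (A + B * B / A) = 1 := by
    field_simp
    linear_combination hABsq
  have hdet : k.det = 1 := by
    rw [hk2, det_fromBlocks_zero₂₁, det_one, mul_one]
    have hLU : fromBlocks (A • (1 : Matrix (Fin p) (Fin p) ℂ)) ((-B) • (1 : Matrix (Fin p) (Fin p) ℂ))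
          (B • (1 : Matrix (Fin p) (Fin p) ℂ)) (A • (1 : Matrix (Fin p) (Fin p) ℂ))
        = (fromBlocks ((1:ℂ) • (1 : Matrix (Fin p) (Fin p) ℂ)) ((0:ℂ) • (1 : Matrix (Fin p) (Fin p) ℂ))
            ((B/A) • (1 : Matrix (Fin p) (Fin p) ℂ)) ((1:ℂ) • (1 : Matrix (Fin p) (Fin p) ℂ))) *
          ((fromBlocks (A • (1 : Matrix (Fin p) (Fin p) ℂ)) ((0:ℂ) • (1 : Matrix (Fin p) (Fin p) ℂ))
              ((0:ℂ) • (1 : Matrix (Fin p) (Fin p) ℂ)) ((A + B * B / A) • (1 : Matrix (Fin p) (Fin p) ℂ))) *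
           (fromBlocks ((1:ℂ) • (1 : Matrix (Fin p) (Fin p) ℂ)) ((-B/A) • (1 : Matrix (Fin p) (Fin p) ℂ))
             ((0:ℂ) • (1 : Matrix (Fin p) (Fin p) ℂ)) ((1:ℂ) • (1 : Matrix (Fin p) (Fin p) ℂ)))) := by
      rw [my_blk, my_blk]
      have f11 : (1:ℂ) * (A * 1 + 0 * 0) + 0 * (0 * 1 + (A + B * B / A) * 0) = A := by ring
      have f12 : (1:ℂ) * (A * (-B/A) + 0 * 1) + 0 * (0 * (-B/A) + (A + B * B / A) * 1) = -B := by
        field_simp; try ring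
      have f21 : (B/A) * (A * 1 + 0 * 0) + 1 * (0 * 1 + (A + B * B / A) * 0) = B := by
        field_simp; try ring
      have f22 : (B/A) * (A * (-B/A) + 0 * 1) + 1 * (0 * (-B/A) + (A + B * B / A) * 1) = A := by
        field_simp; try ring
      rw [f11, f12, f21, f22]
    rw [hLU, det_mul, det_mul]
    simp only [zero_smul, one_smul]
    rw [det_fromBlocks_zero₁₂, det_fromBlocks_zero₂₁, det_fromBlocks_zero₂₁]
    simp only [det_one, one_mul, mul_one, det_smul, Fintype.card_fin]
    rw [← mul_pow, hAE, one_pow]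
  have hmem : k ∈ Matrix.specialUnitaryGroup ((Fin p ⊕ Fin p) ⊕ Fin s) ℂ := by
    rw [Matrix.mem_specialUnitaryGroup_iff]
    refine ⟨Matrix.mem_unitaryGroup_iff'.mpr ?_, hdet⟩
    rw [Matrix.star_eq_conjTranspose]; exact h1
  -- trace
  have htrace : (k * D * k⁻¹ * D).trace
      = ((p * ((a^2*ρ + b^2*σ)*ρ + (b^2*ρ + a^2*σ)*σ) + s * σ^2 : ℝ) : ℂ) := by
    rw [hinv, hkH, hk2, hD2]
    simp only [fromBlocks_multiply, Matrix.mul_zero, Matrix.zero_mul, Matrix.mul_one,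
      Matrix.one_mul, add_zero, zero_add, Matrix.smul_mul, Matrix.mul_smul, smul_smul,
      mul_zero, zero_mul, zero_smul, Matrix.add_mul, Matrix.mul_add,
      my_trace_fromBlocks, Matrix.trace_add, Matrix.trace_smul, Matrix.trace_one,
      smul_eq_mul, Fintype.card_fin, hA, hB]
    push_cast
    ring
  -- real arithmetic
  have hsr : (s:ℝ) = q - p := by
    have h2 : (q:ℝ) = p + s := by exact_mod_cast congrArg (Nat.cast : ℕ → ℝ) hq
    linarith
  have hnr : (n:ℝ) = p + q := by exact_mod_cast congrArg (Nat.cast : ℕ → ℝ) hn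
  have hb2' : b ^ 2 = 1 - a ^ 2 := by linarith
  have keyreal : (p : ℝ) * ((a^2*ρ + b^2*σ)*ρ + (b^2*ρ + a^2*σ)*σ) + (s:ℝ) * σ^2
      = ρ ^ 2 / (c ^ 2 * q ^ 2) *
          ((p:ℝ) * q * n * β ^ 2 * Real.exp (-2 * t * ρ)
            - (p:ℝ) ^ 2 * n * α ^ 2 * Real.exp (-2 * t * σ)) := by
    have hqne : (q:ℝ) ≠ 0 := ne_of_gt hq0
    have hcne : c ≠ 0 := ne_of_gt hc0
    have hβne : β ≠ 0 := ne_of_gt hβ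
    have hαne : α ≠ 0 := ne_of_gt hα
    have hEρ' : Real.exp (-2 * t * ρ) = a ^ 2 * c ^ 2 / β ^ 2 := by
      rw [eq_div_iff (pow_ne_zero 2 hβne)]; linear_combination -ha2
    have hEσ' : Real.exp (-2 * t * σ) = b ^ 2 * c ^ 2 / α ^ 2 := by
      rw [eq_div_iff (pow_ne_zero 2 hαne)]; linear_combination -hb2
    rw [hEρ', hEσ', hσ, hsr, hnr, hb2']
    field_simp
    ring
  have htrace2 : (k * D * k⁻¹ * D).trace
      = ((ρ ^ 2 / (c ^ 2 * q ^ 2) *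
          (p * q * n * β ^ 2 * Real.exp (-2 * t * ρ)
            - p ^ 2 * n * α ^ 2 * Real.exp (-2 * t * σ)) : ℝ) : ℂ) := by
    rw [htrace]
    exact_mod_cast congrArg Complex.ofReal keyreal
  have hiff1 : (ρ ^ 2 / (c ^ 2 * q ^ 2) *
          ((p:ℝ) * q * n * β ^ 2 * Real.exp (-2 * t * ρ)
            - (p:ℝ) ^ 2 * n * α ^ 2 * Real.exp (-2 * t * σ)) = 0)
      ↔ (q:ℝ) * β ^ 2 * Real.exp (-2 * t * ρ) = (p:ℝ) * α ^ 2 * Real.exp (-2 * t * σ) := by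
    rw [mul_eq_zero]
    have hfne : ρ ^ 2 / (c ^ 2 * q ^ 2) ≠ 0 := by positivity
    constructor
    · rintro (h | h)
      · exact absurd h hfne
      · have h2 : (p:ℝ) * n * ((q:ℝ) * β ^ 2 * Real.exp (-2 * t * ρ)
            - (p:ℝ) * α ^ 2 * Real.exp (-2 * t * σ)) = 0 := by linear_combination h
        have hpn : ((p:ℝ) * n) ≠ 0 := by positivity
        have h3 := (mul_eq_zero.mp h2).resolve_left hpn
        linarith
    · intro h
      right
      linear_combination ((p:ℝ) * n) * h
  have hiff2 : ((q:ℝ) * β ^ 2 * Real.exp (-2 * t * ρ) = (p:ℝ) * α ^ 2 * Real.exp (-2 * t * σ))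
      ↔ Real.exp (-2 * t * ρ + 2 * t * σ) = p * α ^ 2 / (q * β ^ 2) := by
    rw [show (-2 * t * ρ + 2 * t * σ : ℝ) = (-2 * t * ρ) - (-2 * t * σ) by ring, Real.exp_sub,
      div_eq_div_iff (Real.exp_pos _).ne' (by positivity : (0:ℝ) < (q:ℝ) * β ^ 2).ne']
    constructor <;> intro h <;> linear_combination h
  have hlogpos : (0:ℝ) < (p:ℝ) * α ^ 2 / ((q:ℝ) * β ^ 2) := by positivity
  have hiff3 : (Real.exp (-2 * t * ρ + 2 * t * σ) = p * α ^ 2 / (q * β ^ 2))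
      ↔ t = ((q : ℝ) / (2 * n * ρ)) * Real.log (q * β ^ 2 / (p * α ^ 2)) := by
    rw [← Real.exp_log hlogpos, Real.exp_eq_exp]
    have hlog : Real.log ((p:ℝ) * α ^ 2 / ((q:ℝ) * β ^ 2))
        = - Real.log ((q:ℝ) * β ^ 2 / ((p:ℝ) * α ^ 2)) := by
      rw [← Real.log_inv, inv_div]
    rw [hlog]
    have hqne : (q:ℝ) ≠ 0 := ne_of_gt hq0
    have hlin : -2 * t * ρ + 2 * t * σ = -(2 * (n:ℝ) * ρ / q) * t := by
      rw [hσ, hnr]; field_simp; ring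
    rw [hlin]
    have hnne : (n:ℝ) ≠ 0 := ne_of_gt hn0
    have hρne : ρ ≠ 0 := ne_of_gt hρ0
    constructor
    · intro h
      field_simp at h ⊢
      first
        | linear_combination -h | linear_combination (2:ℝ) * h
        | linear_combination h | linear_combination (-2:ℝ) * h
    · intro h
      field_simp at h ⊢
      first
        | linear_combination -h | linear_combination (2:ℝ) * h
        | linear_combination h | linear_combination (-2:ℝ) * h
  refine ⟨hmem, htrace2, ?_, ?_⟩
  · rw [htrace2, Complex.ofReal_eq_zero]
    exact hiff1.trans hiff2
  · rw [htrace2, Complex.ofReal_eq_zero]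
    exact hiff1.trans (hiff2.trans hiff3)
end
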